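/- arXiv:0905.1554 — 3 statements merged into one kernel-verified Lean document; each statement's English description precedes it below -/
import Mathlib

section
/- If (M N) ▷* λx.P (where ▷* is the reflexive-transitive closure of one-step βμμ'-reduction), then M ▷* λy.M₁ for some y, M₁ such that M₁[y:=N] ▷* λx.P. -/
/-- λμ-terms: variables, λ-abstraction, application, μ-abstraction, named term (α M). -/
inductive Trm : Type
  | var : ℕ → Trm
  | lam : ℕ → Trm → Trm
  | app : Trm → Trm → Trm
  | mu  : ℕ → Trm → Trm
  | mv  : ℕ → Trm → Trm
  deriving DecidableEq

namespace Trm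

/-- Substitution M[x:=N]. -/
def subst : Trm → ℕ → Trm → Trm
  | var y, x, N => if y = x then N else var y
  | lam y B, x, N => if y = x then lam y B else lam y (subst B x N)
  | app A B, x, N => app (subst A x N) (subst B x N)
  | mu a B, x, N => mu a (subst B x N)
  | mv a B, x, N => mv a (subst B x N)

/-- M[α=_r N]: replace each subterm (α U) by (α (U N)). -/
def rsub : Trm → ℕ → Trm → Trm
  | var y, _, _ => var y
  | lam y B, a, N => lam y (rsub B a N)
  | app A B, a, N => app (rsub A a N) (rsub B a N)
  | mu b B, a, N => if b = a then mu b B else mu b (rsub B a N)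
  | mv b B, a, N => if b = a then mv b (app (rsub B a N) N) else mv b (rsub B a N)

/-- M[α=_l N]: replace each subterm (α U) by (α (N U)). -/
def lsub : Trm → ℕ → Trm → Trm
  | var y, _, _ => var y
  | lam y B, a, N => lam y (lsub B a N)
  | app A B, a, N => app (lsub A a N) (lsub B a N)
  | mu b B, a, N => if b = a then mu b B else mu b (lsub B a N)
  | mv b B, a, N => if b = a then mv b (app N (lsub B a N)) else mv b (lsub B a N)

/-- One-step βμμ'-reduction (compatible closure). -/
inductive Red : Trm → Trm → Prop
  | beta (x M N) : Red (app (lam x M) N) (subst M x N)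
  | muR (a M N) : Red (app (mu a M) N) (mu a (rsub M a N))
  | muL (a M N) : Red (app M (mu a N)) (mu a (lsub N a M))
  | appL {M M'} (N) : Red M M' → Red (app M N) (app M' N)
  | appR (M) {N N'} : Red N N' → Red (app M N) (app M N')
  | lamC (x) {M M'} : Red M M' → Red (lam x M) (lam x M')
  | muC (a) {M M'} : Red M M' → Red (mu a M) (mu a M')
  | mvC (a) {M M'} : Red M M' → Red (mv a M) (mv a M')

/-- ▷*: reflexive transitive closure. -/
def Reds : Trm → Trm → Prop := Relation.ReflTransGen Red

/-- Strong normalization: no infinite reduction sequence. -/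
def SN (M : Trm) : Prop := Acc (fun a b => Red b a) M

/-- Left-nested application (h M₁ ... Mₙ). -/
def appList (h : Trm) (l : List Trm) : Trm := l.foldl app h

end Trm

/-!
Follow the reduction sequence from `(M N)` to `λx.P`. A μ-abstraction only ever reduces to
μ-abstractions, so neither a μ- nor a μ'-step at the root can occur; as long as no root step is
taken the term stays an application, so the sequence must contain a root β-step
`(λy.M₁ N') ▷ M₁[y:=N']`. The steps before it happen inside `M` (giving `M ▷* λy.M₁`) or inside
`N` (giving `N ▷* N'`, hence `M₁[y:=N] ▷* M₁[y:=N']`).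
-/

namespace Trm

namespace Reds

theorem app_left {M M' : Trm} (N : Trm) (h : Reds M M') : Reds (app M N) (app M' N) :=
  Relation.ReflTransGen.lift (app · N) (fun _ _ r => Red.appL N r) _ _ h

theorem app_right (M : Trm) {N N' : Trm} (h : Reds N N') : Reds (app M N) (app M N') :=
  Relation.ReflTransGen.lift (app M) (fun _ _ r => Red.appR M r) _ _ h

theorem lam (y : ℕ) {M M' : Trm} (h : Reds M M') : Reds (Trm.lam y M) (Trm.lam y M') :=
  Relation.ReflTransGen.lift (Trm.lam y) (fun _ _ r => Red.lamC y r) _ _ h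

theorem mu (a : ℕ) {M M' : Trm} (h : Reds M M') : Reds (Trm.mu a M) (Trm.mu a M') :=
  Relation.ReflTransGen.lift (Trm.mu a) (fun _ _ r => Red.muC a r) _ _ h

theorem mv (a : ℕ) {M M' : Trm} (h : Reds M M') : Reds (Trm.mv a M) (Trm.mv a M') :=
  Relation.ReflTransGen.lift (Trm.mv a) (fun _ _ r => Red.mvC a r) _ _ h

theorem subst_right (M : Trm) (x : ℕ) {N N' : Trm} (h : Reds N N') :
    Reds (subst M x N) (subst M x N') := by
  induction M with
  | var y =>
    unfold subst
    split
    · exact h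
    · exact Relation.ReflTransGen.refl
  | lam y B ih =>
    unfold subst
    split
    · exact Relation.ReflTransGen.refl
    · exact ih.lam y
  | app A B ihA ihB => exact (ihA.app_left _).trans (ihB.app_right _)
  | mu a B ih => exact ih.mu a
  | mv a B ih => exact ih.mv a

theorem exists_eq_mu {a : ℕ} {M Q : Trm} (h : Reds (Trm.mu a M) Q) : ∃ M', Q = Trm.mu a M' := by
  induction h with
  | refl => exact ⟨M, rfl⟩
  | tail _ step ih =>
    obtain ⟨M', rfl⟩ := ih
    cases step with
    | muC _ r => exact ⟨_, rfl⟩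

end Reds

end Trm

open Trm

theorem app_reds_lam {M N P : Trm} {x : ℕ}
    (h : Reds (app M N) (lam x P)) :
    ∃ (y : ℕ) (M₁ : Trm), Reds M (lam y M₁) ∧ Reds (subst M₁ y N) (lam x P) := by
  generalize hT : app M N = T at h
  induction h using Relation.ReflTransGen.head_induction_on generalizing M N with
  | refl => cases hT
  | head step rest ih =>
    subst hT
    cases step with
    | beta y M₁ N => exact ⟨y, M₁, Relation.ReflTransGen.refl, rest⟩
    | muR | muL =>
      obtain ⟨_, hmu⟩ := Reds.exists_eq_mu rest
      cases hmu
    | appL _ r =>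
      obtain ⟨y, M₁, hM, hsubst⟩ := ih rfl
      exact ⟨y, M₁, hM.head r, hsubst⟩
    | appR _ r =>
      obtain ⟨y, M₁, hM, hsubst⟩ := ih rfl
      exact ⟨y, M₁, hM, (Reds.subst_right M₁ y (.single r)).trans hsubst⟩
end

section
/- Neither μμ'-reduction nor βμ'-reduction is confluent: the term (μα.x μβ.y) reduces by μ to μα.x and by μ' to μβ.y (up to renaming, these are distinct normal forms with no common reduct); similarly, (λz.x μβ.y) reduces by β to x and by μ' to μβ.y, which have no common reduct. -/
open Trm

lemma var_nf (x : ℕ) (R : Trm) : ¬ Red (var x) R := by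
  intro h; cases h

lemma muvar_nf (a x : ℕ) (R : Trm) : ¬ Red (mu a (var x)) R := by
  intro h; cases h with
  | muC _ h' => exact var_nf _ _ h'

lemma reds_var (x : ℕ) (R : Trm) (h : Reds (var x) R) : R = var x := by
  induction h with
  | refl => rfl
  | tail _ hstep ih => subst ih; exact absurd hstep (var_nf _ _)

lemma reds_muvar (a x : ℕ) (R : Trm) (h : Reds (mu a (var x)) R) : R = mu a (var x) := by
  induction h with
  | refl => rfl
  | tail _ hstep ih => subst ih; exact absurd hstep (muvar_nf _ _ _)

theorem not_confluent :
    Red (app (mu 0 (var 0)) (mu 1 (var 1))) (mu 0 (var 0)) ∧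
    Red (app (mu 0 (var 0)) (mu 1 (var 1))) (mu 1 (var 1)) ∧
    (¬ ∃ R : Trm, Reds (mu 0 (var 0)) R ∧ Reds (mu 1 (var 1)) R) ∧
    Red (app (lam 2 (var 0)) (mu 1 (var 1))) (var 0) ∧
    Red (app (lam 2 (var 0)) (mu 1 (var 1))) (mu 1 (var 1)) ∧
    (¬ ∃ R : Trm, Reds (var 0) R ∧ Reds (mu 1 (var 1)) R) := by
  refine ⟨?_, ?_, ?_, ?_, ?_, ?_⟩
  · simpa [rsub] using Red.muR 0 (var 0) (mu 1 (var 1))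
  · simpa [lsub] using Red.muL 1 (mu 0 (var 0)) (var 1)
  · rintro ⟨R, h1, h2⟩
    rw [reds_muvar _ _ _ h1] at h2
    simpa using reds_muvar _ _ _ h2
  · simpa [subst] using Red.beta 2 (var 0) (mu 1 (var 1))
  · simpa [lsub] using Red.muL 1 (lam 2 (var 0)) (var 1)
  · rintro ⟨R, h1, h2⟩
    rw [reds_var _ _ h1] at h2
    simpa using reds_muvar _ _ _ h2
end

section
/- Let 0 = λxλy.y, 1 = λxλy.x, Δ = λx.(x x), P = λxλyλz.(y (z 1 0) (z 0 1) (λd.1) Δ Δ), M₀ = λx.(x P 0) and M₁ = λx.(x P 1). Then the applications (M₁ M₀) and (M₀ M₁) are not strongly normalizing for βμμ'-reduction (indeed already for β-reduction). -/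
open Trm

namespace Trm

def c0 : Trm := lam 0 (lam 1 (var 1))        -- 0 = λxλy.y
def c1 : Trm := lam 0 (lam 1 (var 0))        -- 1 = λxλy.x
def Del : Trm := lam 0 (app (var 0) (var 0)) -- Δ = λx.(x x)
/-- P = λxλyλz.(y (z 1 0) (z 0 1) (λd.1) Δ Δ) -/
def Pt : Trm := lam 0 (lam 1 (lam 2 (appList (var 1)
  [app (app (var 2) c1) c0, app (app (var 2) c0) c1, lam 3 c1, Del, Del])))
def M0 : Trm := lam 0 (app (app (var 0) Pt) c0)  -- M₀ = λx.(x P 0)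
def M1 : Trm := lam 0 (app (app (var 0) Pt) c1)  -- M₁ = λx.(x P 1)
/-- N = (α λz.(α z)) with α = 0 and z = 12. -/
def Nt : Trm := mv 0 (lam 12 (mv 0 (var 12)))

end Trm


open Relation

lemma not_sn_loop {a : Trm} : Red a a → ¬ SN a := by
  intro h hsn
  revert h
  induction hsn with
  | intro x _ ih => exact fun h => ih x h h

lemma sn_of_reds {a b : Trm} (h : Reds a b) (hsn : SN a) : SN b := by
  induction h with
  | refl => exact hsn
  | tail _ hr ih => exact Acc.inv ih hr

lemma reds_M1M0 : Reds (app M1 M0) (app Del Del) :=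
  .head (Red.beta 0 _ M0) <|
  .head (Red.appL _ (Red.beta 0 _ Pt)) <|
  .head (Red.appL _ (Red.appL _ (Red.beta 0 _ Pt))) <|
  .head (Red.appL _ (Red.beta 1 _ c0)) <|
  .head (Red.beta 2 _ c1) <|
  .head (Red.appL _ (Red.appL _ (Red.appL _ (Red.appL _ (Red.beta 0 _ _))))) <|
  .head (Red.appL _ (Red.appL _ (Red.appL _ (Red.beta 1 _ _)))) <|
  .head (Red.appL _ (Red.appL _ (Red.appL _ (Red.appL _ (Red.beta 0 _ _))))) <|
  .head (Red.appL _ (Red.appL _ (Red.appL _ (Red.beta 1 _ _)))) <|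
  .head (Red.appL _ (Red.appL _ (Red.beta 0 _ _))) <|
  .single (Red.appL _ (Red.beta 1 _ _))

lemma reds_M0M1 : Reds (app M0 M1) (app Del Del) :=
  .head (Red.beta 0 _ M1) <|
  .head (Red.appL _ (Red.beta 0 _ Pt)) <|
  .head (Red.appL _ (Red.appL _ (Red.beta 0 _ Pt))) <|
  .head (Red.appL _ (Red.beta 1 _ c1)) <|
  .head (Red.beta 2 _ c0) <|
  .head (Red.appL _ (Red.appL _ (Red.appL _ (Red.appL _ (Red.beta 0 _ _))))) <|
  .head (Red.appL _ (Red.appL _ (Red.appL _ (Red.beta 1 _ _)))) <|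
  .head (Red.appL _ (Red.appL _ (Red.appL _ (Red.appL _ (Red.beta 0 _ _))))) <|
  .head (Red.appL _ (Red.appL _ (Red.appL _ (Red.beta 1 _ _)))) <|
  .head (Red.appL _ (Red.appL _ (Red.beta 0 _ _))) <|
  .single (Red.appL _ (Red.beta 1 _ _))

theorem M1M0_not_sn : ¬ SN (app M1 M0) ∧ ¬ SN (app M0 M1) := by
  constructor
  · exact fun h => not_sn_loop (a := app Del Del) (Red.beta 0 (app (var 0) (var 0)) Del) (sn_of_reds reds_M1M0 h)
  · exact fun h => not_sn_loop (a := app Del Del) (Red.beta 0 (app (var 0) (var 0)) Del) (sn_of_reds reds_M0M1 h)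
end
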